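/- For every integer n ≥ 4, (2n − 5) · ∑_T O(T) = n·(n − 4) · C_{n−2}, the sum ranging over all triangulations T of P_n; equivalently, the expected value of O under a uniformly random triangulation of P_n is n(n−4)/(2n−5). -/

import Mathlib

open Finset
open scoped Classical

/-- `IsDiag l r i j` : the pair `{i, j}` (written with `i < j`) is a diagonal of the
convex sub-polygon on vertices `{l, …, r}`. -/
def IsDiag (l r i j : ℕ) : Prop :=
  l ≤ i ∧ i + 2 ≤ j ∧ j ≤ r ∧ ¬(i = l ∧ j = r)

/-- Two diagonals `{a, b}` and `{c, d}` (written with `a < b`, `c < d`) cross. -/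
def Crosses (a b c d : ℕ) : Prop :=
  (a < c ∧ c < b ∧ b < d) ∨ (c < a ∧ a < d ∧ d < b)

/-- All diagonals of the sub-polygon on `{l, …, r}`, as ordered pairs. -/
noncomputable def allDiags (l r : ℕ) : Finset (ℕ × ℕ) :=
  (range (r + 1) ×ˢ range (r + 1)).filter fun p => IsDiag l r p.1 p.2

/-- The triangulations of the sub-polygon on `{l, …, r}` : sets of `r - l - 2`
pairwise noncrossing diagonals. -/
noncomputable def triangulations (l r : ℕ) : Finset (Finset (ℕ × ℕ)) :=
  (allDiags l r).powerset.filter fun T =>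
    T.card = r - l - 2 ∧ ∀ d ∈ T, ∀ e ∈ T, ¬ Crosses d.1 d.2 e.1 e.2

/-- `IsEdge l r i j` : the pair `{i, j}` (with `i < j`) is an edge (boundary side) of the
sub-polygon on `{l, …, r}`. -/
def IsEdge (l r i j : ℕ) : Prop :=
  (l ≤ i ∧ j = i + 1 ∧ j ≤ r) ∨ (i = l ∧ j = r)

/-- `{i, j}` is a side available in the triangulation `T` (an edge of the polygon or a
diagonal of `T`). -/
def IsSide (l r : ℕ) (T : Finset (ℕ × ℕ)) (i j : ℕ) : Prop :=
  IsEdge l r i j ∨ (i, j) ∈ T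

/-- The triangles of a triangulation `T` of the sub-polygon on `{l, …, r}`, as ordered
triples `(a, b, c)` with `a < b < c`, each of whose three sides is an edge or a diagonal
of `T`. -/
noncomputable def triangles (l r : ℕ) (T : Finset (ℕ × ℕ)) : Finset (ℕ × ℕ × ℕ) :=
  (range (r + 1) ×ˢ range (r + 1) ×ˢ range (r + 1)).filter fun t =>
    t.1 < t.2.1 ∧ t.2.1 < t.2.2 ∧
      IsSide l r T t.1 t.2.1 ∧ IsSide l r T t.2.1 t.2.2 ∧ IsSide l r T t.1 t.2.2

/-- The number of sides of the triangle `{a, b, c}` (with `a < b < c`) that are edges of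
the sub-polygon on `{l, …, r}`. -/
noncomputable def edgeCount (l r a b c : ℕ) : ℕ :=
  (if IsEdge l r a b then 1 else 0) + (if IsEdge l r b c then 1 else 0) +
    (if IsEdge l r a c then 1 else 0)

/-- `O(T)` : the number of triangles of `T` with exactly one side an edge of `P_n`. -/
noncomputable def oneSideCount (n : ℕ) (T : Finset (ℕ × ℕ)) : ℕ :=
  ((triangles 1 n T).filter fun t => edgeCount 1 n t.1 t.2.1 t.2.2 = 1).card

/-- `Ear(T)` : the number of triangles of `T` with at least two sides edges of `P_n`. -/
noncomputable def earCount (n : ℕ) (T : Finset (ℕ × ℕ)) : ℕ :=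
  ((triangles 1 n T).filter fun t => 2 ≤ edgeCount 1 n t.1 t.2.1 t.2.2).card

/-- `D(T)` : the number of triangles of `T` containing vertex `1`. -/
noncomputable def degOne (n : ℕ) (T : Finset (ℕ × ℕ)) : ℕ :=
  ((triangles 1 n T).filter fun t => t.1 = 1 ∨ t.2.1 = 1 ∨ t.2.2 = 1).card

/-- `B(T)` : the number of triangles `{l, j, r}` of `T` (with `l < j < r`) such that
`j - l = 1`. -/
noncomputable def blueCount (n : ℕ) (T : Finset (ℕ × ℕ)) : ℕ :=
  ((triangles 1 n T).filter fun t => t.2.1 - t.1 = 1).card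

/-- `A_i(T)` : the number of triangles `{1, a, b}` of `T` containing vertex `1`
(written with `1 < a < b`) such that `b - a = i`. -/
noncomputable def angleCount (n : ℕ) (T : Finset (ℕ × ℕ)) (i : ℕ) : ℕ :=
  ((triangles 1 n T).filter fun t => t.1 = 1 ∧ t.2.2 - t.2.1 = i).card

/-!
For `n ≥ 4` no triangle has three boundary sides, and each of the `n` boundary edges lies in
exactly one triangle; hence `O(T) + 2 Ear(T) = n`, where `Ear(T)` counts the triangles with two
boundary sides. Such an ear is cut off by the short diagonal around its middle vertex `w`, and
deleting `w` identifies the triangulations containing that diagonal with the triangulations of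
`P_{n-1}`, so `∑_T Ear(T) = n C_{n-3}`. Decomposing along the triangle on the side `(1, n)` gives
`C_{n-2}` triangulations, and `(n - 1) C_{n-2} = 2 (2n - 5) C_{n-3}` turns
`∑_T O(T) = n C_{n-2} - 2n C_{n-3}` into the claim.

The decomposition rests on the bound `r - l - 2` on the size of a noncrossing family of
diagonals of the polygon on `{l, …, r}`: it makes every triangulation maximal.
-/
def Noncrossing (D : Finset (ℕ × ℕ)) : Prop :=
  ∀ d ∈ D, ∀ e ∈ D, ¬ Crosses d.1 d.2 e.1 e.2

def SideOf (e : ℕ × ℕ) (t : ℕ × ℕ × ℕ) : Prop :=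
  e = (t.1, t.2.1) ∨ e = (t.2.1, t.2.2) ∨ e = (t.1, t.2.2)

lemma Noncrossing.mono {D D' : Finset (ℕ × ℕ)} (h : Noncrossing D') (hD : D ⊆ D') :
    Noncrossing D :=
  fun p hp q hq => h p (hD hp) q (hD hq)

section Basic

variable {l r : ℕ} {T : Finset (ℕ × ℕ)}

lemma mem_allDiags {p : ℕ × ℕ} : p ∈ allDiags l r ↔ IsDiag l r p.1 p.2 := by
  simp only [allDiags, mem_filter, mem_product, mem_range, and_iff_right_iff_imp]
  rintro ⟨-, h, h', -⟩
  omega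

lemma mem_triangulations :
    T ∈ triangulations l r ↔ T ⊆ allDiags l r ∧ T.card = r - l - 2 ∧ Noncrossing T := by
  simp only [triangulations, mem_filter, mem_powerset, Noncrossing]

lemma isDiag_of_subset (hT : T ⊆ allDiags l r) {p : ℕ × ℕ} (hp : p ∈ T) :
    IsDiag l r p.1 p.2 :=
  mem_allDiags.1 (hT hp)

lemma IsSide.bounds (hlr : l < r) (hT : T ⊆ allDiags l r) {i j : ℕ} (h : IsSide l r T i j) :
    l ≤ i ∧ i < j ∧ j ≤ r := by
  rcases h with (⟨h₁, h₂, h₃⟩ | ⟨h₁, h₂⟩) | h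
  · omega
  · omega
  · obtain ⟨h₁, h₂, h₃, -⟩ := isDiag_of_subset hT h
    omega

lemma mem_triangles (hlr : l < r) (hT : T ⊆ allDiags l r) {t : ℕ × ℕ × ℕ} :
    t ∈ triangles l r T ↔ t.1 < t.2.1 ∧ t.2.1 < t.2.2 ∧ IsSide l r T t.1 t.2.1 ∧
      IsSide l r T t.2.1 t.2.2 ∧ IsSide l r T t.1 t.2.2 := by
  simp only [triangles, mem_filter, mem_product, mem_range, and_iff_right_iff_imp]
  rintro ⟨h₁, h₂, -, -, h⟩
  have := h.bounds hlr hT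
  omega

lemma bounds_of_mem_triangles (hlr : l < r) (hT : T ⊆ allDiags l r) {t : ℕ × ℕ × ℕ}
    (ht : t ∈ triangles l r T) : l ≤ t.1 ∧ t.1 < t.2.1 ∧ t.2.1 < t.2.2 ∧ t.2.2 ≤ r := by
  obtain ⟨h₁, h₂, -, -, h⟩ := (mem_triangles hlr hT).1 ht
  have := h.bounds hlr hT
  omega

/-- An edge of the polygon crosses nothing, so crossing sides would be crossing diagonals. -/
lemma IsSide.not_crosses (hlr : l < r) (hT : T ⊆ allDiags l r) (hNC : Noncrossing T)
    {a b c d : ℕ} (hab : IsSide l r T a b) (hcd : IsSide l r T c d) : ¬ Crosses a b c d := by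
  have key : ∀ {a b c d}, IsSide l r T a b → IsSide l r T c d → ¬ (a < c ∧ c < b ∧ b < d) := by
    rintro a b c d hab hcd ⟨hac, hcb, hbd⟩
    have := hab.bounds hlr hT
    have := hcd.bounds hlr hT
    have hab' : (a, b) ∈ T := hab.resolve_left (by unfold IsEdge; omega)
    have hcd' : (c, d) ∈ T := hcd.resolve_left (by unfold IsEdge; omega)
    exact hNC _ hab' _ hcd' (Or.inl ⟨hac, hcb, hbd⟩)
  rintro (h | h)
  exacts [key hab hcd h, key hcd hab h]

end Basic

section Unique
variable {l r : ℕ} {T : Finset (ℕ × ℕ)}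

/-- The third vertices of two triangles on a boundary edge lie on the same side of it; if they
differ, a side of one triangle crosses a side of the other. -/
lemma eq_of_sideOf_of_isEdge (hlr : l < r) (hT : T ⊆ allDiags l r) (hNC : Noncrossing T)
    {e : ℕ × ℕ} (he : IsEdge l r e.1 e.2) {t t' : ℕ × ℕ × ℕ} (ht : t ∈ triangles l r T)
    (ht' : t' ∈ triangles l r T) (hs : SideOf e t) (hs' : SideOf e t') : t = t' := by
  obtain ⟨i, j⟩ := e
  obtain ⟨a, b, c⟩ := t
  obtain ⟨a', b', c'⟩ := t'
  obtain ⟨hab, hbc, s₁, s₂, s₃⟩ := (mem_triangles hlr hT).1 ht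
  obtain ⟨hab', hbc', s₁', s₂', s₃'⟩ := (mem_triangles hlr hT).1 ht'
  have hc := s₃.bounds hlr hT
  have hc' := s₃'.bounds hlr hT
  simp only [SideOf, Prod.mk.injEq] at he hs hs' hab hbc hab' hbc' s₁ s₂ s₃ s₁' s₂' s₃' hc hc'
  rcases he with ⟨-, rfl, -⟩ | ⟨rfl, rfl⟩
  · rcases hs with hs | hs | hs <;> rcases hs' with hs' | hs' | hs' <;> try omega
    · rcases lt_trichotomy c c' with h | h | h
      · exact (s₃.not_crosses hlr hT hNC s₂' (Or.inl ⟨by omega, by omega, h⟩)).elim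
      · simp only [Prod.mk.injEq]; omega
      · exact (s₃'.not_crosses hlr hT hNC s₂ (Or.inl ⟨by omega, by omega, h⟩)).elim
    · exact (s₃'.not_crosses hlr hT hNC s₃ (Or.inl ⟨by omega, by omega, by omega⟩)).elim
    · exact (s₃.not_crosses hlr hT hNC s₃' (Or.inl ⟨by omega, by omega, by omega⟩)).elim
    · rcases lt_trichotomy a a' with h | h | h
      · exact (s₁.not_crosses hlr hT hNC s₃' (Or.inl ⟨h, by omega, by omega⟩)).elim
      · simp only [Prod.mk.injEq]; omega
      · exact (s₁'.not_crosses hlr hT hNC s₃ (Or.inl ⟨h, by omega, by omega⟩)).elim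
  · rcases hs with hs | hs | hs <;> rcases hs' with hs' | hs' | hs' <;> try omega
    rcases lt_trichotomy b b' with h | h | h
    · exact (s₁'.not_crosses hlr hT hNC s₂ (Or.inl ⟨by omega, h, by omega⟩)).elim
    · simp only [Prod.mk.injEq]; omega
    · exact (s₁.not_crosses hlr hT hNC s₂' (Or.inl ⟨by omega, h, by omega⟩)).elim

end Unique

/-- Relabelling that deletes the vertices `a + 1, …, a + k`. -/
def squeeze (a k v : ℕ) : ℕ := if v ≤ a then v else v - k

def stretch (a k v : ℕ) : ℕ := if v ≤ a then v else v + k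

section Relabel
variable {a k : ℕ}

lemma squeeze_stretch (v : ℕ) : squeeze a k (stretch a k v) = v := by
  unfold squeeze stretch
  split_ifs <;> omega

lemma stretch_squeeze {v : ℕ} (hv : v ≤ a ∨ a + k < v) : stretch a k (squeeze a k v) = v := by
  unfold squeeze stretch
  split_ifs <;> omega

lemma strictMono_stretch : StrictMono (stretch a k) := by
  intro x y h
  unfold stretch
  split_ifs <;> omega

lemma strictMonoOn_squeeze : StrictMonoOn (squeeze a k) {v | v ≤ a ∨ a + k < v} := by
  intro x hx y hy h
  simp only [Set.mem_ofPred_eq] at hx hy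
  unfold squeeze
  split_ifs <;> omega

lemma StrictMonoOn.crosses_iff {f : ℕ → ℕ} {s : Set ℕ} (hf : StrictMonoOn f s) {a b c d : ℕ}
    (ha : a ∈ s) (hb : b ∈ s) (hc : c ∈ s) (hd : d ∈ s) :
    Crosses (f a) (f b) (f c) (f d) ↔ Crosses a b c d := by
  simp only [Crosses, hf.lt_iff_lt, ha, hb, hc, hd]

end Relabel

section Bound
variable {l r : ℕ} {D : Finset (ℕ × ℕ)}

lemma endpoints_outside_of_shortest (hD : D ⊆ allDiags l r) (hNC : Noncrossing D) {a b : ℕ}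
    (hab : (a, b) ∈ D) (hmin : ∀ p ∈ D, b - a ≤ p.2 - p.1) {p : ℕ × ℕ} (hp : p ∈ D.erase (a, b)) :
    (p.1 ≤ a ∨ b ≤ p.1) ∧ (p.2 ≤ a ∨ b ≤ p.2) := by
  obtain ⟨hpab, hpD⟩ := mem_erase.1 hp
  have := isDiag_of_subset hD hpD
  have := isDiag_of_subset hD hab
  have := hmin p hpD
  have := hNC _ hab _ hpD
  have := hNC _ hpD _ hab
  simp only [IsDiag, Crosses, ne_eq, Prod.ext_iff] at *
  omega

/-- Contracting the vertices strictly inside a shortest diagonal maps the remaining diagonals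
injectively to a noncrossing family of a smaller polygon. -/
lemma card_le_of_noncrossing (hD : D ⊆ allDiags l r) (hNC : Noncrossing D) :
    D.card ≤ r - l - 2 := by
  induction r using Nat.strong_induction_on generalizing D with
  | _ r ih =>
  rcases D.eq_empty_or_nonempty with rfl | hne
  · simp
  obtain ⟨⟨a, b⟩, hab, hmin⟩ := D.exists_min_image (fun p => p.2 - p.1) hne
  obtain ⟨hla, hab₂, hbr, hlr⟩ : IsDiag l r a b := isDiag_of_subset hD hab
  set s : Set ℕ := {v | v ≤ a ∨ a + (b - a - 1) < v}
  have avoid : ∀ p ∈ D.erase (a, b), p.1 ∈ s ∧ p.2 ∈ s := fun p hp => by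
    have := endpoints_outside_of_shortest hD hNC hab hmin hp
    simp only [s, Set.mem_ofPred_eq]
    omega
  set f := Prod.map (squeeze a (b - a - 1)) (squeeze a (b - a - 1))
  have inj : Set.InjOn f (D.erase (a, b)) := by
    rintro ⟨p₁, p₂⟩ hp ⟨q₁, q₂⟩ hq hpq
    obtain ⟨hp₁, hp₂⟩ := avoid _ hp
    obtain ⟨hq₁, hq₂⟩ := avoid _ hq
    simp only [f, Prod.map, Prod.mk.injEq] at hpq ⊢
    exact ⟨strictMonoOn_squeeze.injOn hp₁ hq₁ hpq.1, strictMonoOn_squeeze.injOn hp₂ hq₂ hpq.2⟩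
  have sub : (D.erase (a, b)).image f ⊆ allDiags l (r - (b - a - 1)) := by
    simp only [subset_iff, mem_image, mem_allDiags]
    rintro _ ⟨⟨p₁, p₂⟩, hp, rfl⟩
    have := avoid _ hp
    have := isDiag_of_subset hD (mem_of_mem_erase hp)
    have := ne_of_mem_erase hp
    simp only [s, f, squeeze, Prod.map, IsDiag, Set.mem_ofPred_eq, ne_eq, Prod.mk.injEq] at *
    split_ifs <;> omega
  have nc : Noncrossing ((D.erase (a, b)).image f) := by
    simp only [Noncrossing, mem_image]
    rintro _ ⟨⟨p₁, p₂⟩, hp, rfl⟩ _ ⟨⟨q₁, q₂⟩, hq, rfl⟩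
    obtain ⟨hp₁, hp₂⟩ := avoid _ hp
    obtain ⟨hq₁, hq₂⟩ := avoid _ hq
    rw [Prod.map_fst, Prod.map_snd, Prod.map_fst, Prod.map_snd,
      strictMonoOn_squeeze.crosses_iff hp₁ hp₂ hq₁ hq₂]
    exact hNC _ (mem_of_mem_erase hp) _ (mem_of_mem_erase hq)
  have := ih (r - (b - a - 1)) (by omega) sub nc
  rw [card_image_of_injOn inj, card_erase_of_mem hab] at this
  have := card_pos.2 ⟨_, hab⟩
  omega

end Bound

noncomputable def apexDiags (l r j : ℕ) : Finset (ℕ × ℕ) :=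
  ({(l, j), (j, r)} : Finset (ℕ × ℕ)).filter fun p => IsDiag l r p.1 p.2

/-- The triangulation of the polygon on `{l, …, r}` made of the triangle `(l, j, r)` and
triangulations `T₁`, `T₂` of the polygons on `{l, …, j}` and `{j, …, r}`. -/
noncomputable def glue (l r j : ℕ) (T₁ T₂ : Finset (ℕ × ℕ)) : Finset (ℕ × ℕ) :=
  T₁ ∪ T₂ ∪ apexDiags l r j

noncomputable def leftPart (l j : ℕ) (T : Finset (ℕ × ℕ)) : Finset (ℕ × ℕ) :=
  (T.filter fun p => p.2 ≤ j).erase (l, j)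

noncomputable def rightPart (j r : ℕ) (T : Finset (ℕ × ℕ)) : Finset (ℕ × ℕ) :=
  (T.filter fun p => j ≤ p.1).erase (j, r)

section Glue
variable {l r j : ℕ} {T₁ T₂ : Finset (ℕ × ℕ)}

lemma mem_apexDiags {p : ℕ × ℕ} (hlj : l < j) (hjr : j < r) :
    p ∈ apexDiags l r j ↔ (p = (l, j) ∧ l + 2 ≤ j) ∨ (p = (j, r) ∧ j + 2 ≤ r) := by
  simp only [apexDiags, mem_filter, mem_insert, mem_singleton]
  constructor
  · rintro ⟨rfl | rfl, h⟩ <;>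
      simp only [IsDiag, Prod.mk.injEq, le_refl, true_and, and_true] at h ⊢ <;> omega
  · rintro (⟨rfl, h⟩ | ⟨rfl, h⟩) <;> refine ⟨by simp, ?_⟩ <;> simp only [IsDiag] <;> omega

lemma card_apexDiags (hlj : l < j) (hjr : j < r) :
    (apexDiags l r j).card = (if l + 2 ≤ j then 1 else 0) + (if j + 2 ≤ r then 1 else 0) := by
  rw [apexDiags, card_filter, sum_pair (by simp only [ne_eq, Prod.mk.injEq]; omega)]
  simp only [IsDiag, le_refl, true_and, and_true]
  split_ifs <;> omega

lemma glue_subset_allDiags (hlj : l < j) (hjr : j < r) (hT₁ : T₁ ⊆ allDiags l j)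
    (hT₂ : T₂ ⊆ allDiags j r) : glue l r j T₁ T₂ ⊆ allDiags l r := by
  intro p hp
  rw [mem_allDiags]
  rcases mem_union.1 hp with hp | hp
  · rcases mem_union.1 hp with hp | hp
    · obtain ⟨_, _, _, _⟩ := isDiag_of_subset hT₁ hp
      refine ⟨?_, ?_, ?_, ?_⟩ <;> omega
    · obtain ⟨_, _, _, _⟩ := isDiag_of_subset hT₂ hp
      refine ⟨?_, ?_, ?_, ?_⟩ <;> omega
  · exact (mem_filter.1 hp).2

lemma mem_glue {p : ℕ × ℕ} (hlj : l < j) (hjr : j < r) :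
    p ∈ glue l r j T₁ T₂ ↔
      p ∈ T₁ ∨ p ∈ T₂ ∨ (p = (l, j) ∧ l + 2 ≤ j) ∨ (p = (j, r) ∧ j + 2 ≤ r) := by
  rw [glue, mem_union, mem_union, mem_apexDiags hlj hjr, or_assoc]

lemma card_glue (hlj : l < j) (hjr : j < r) (hT₁ : T₁ ⊆ allDiags l j)
    (hT₂ : T₂ ⊆ allDiags j r) :
    (glue l r j T₁ T₂).card = T₁.card + T₂.card + (apexDiags l r j).card := by
  have h₁₂ : Disjoint T₁ T₂ := by
    refine disjoint_left.2 fun p h₁ h₂ => ?_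
    have := isDiag_of_subset hT₁ h₁
    have := isDiag_of_subset hT₂ h₂
    simp only [IsDiag] at *
    omega
  have h₃ : Disjoint (T₁ ∪ T₂) (apexDiags l r j) := by
    refine disjoint_left.2 fun p h h₃ => ?_
    rcases (mem_apexDiags hlj hjr).1 h₃ with ⟨rfl, -⟩ | ⟨rfl, -⟩ <;>
      rcases mem_union.1 h with h | h
    · obtain ⟨-, -, -, h⟩ : IsDiag l j l j := isDiag_of_subset hT₁ h
      exact h ⟨rfl, rfl⟩
    · obtain ⟨h, -⟩ : IsDiag j r l j := isDiag_of_subset hT₂ h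
      omega
    · obtain ⟨-, -, h, -⟩ : IsDiag l j j r := isDiag_of_subset hT₁ h
      omega
    · obtain ⟨-, -, -, h⟩ : IsDiag j r j r := isDiag_of_subset hT₂ h
      exact h ⟨rfl, rfl⟩
  rw [glue, card_union_of_disjoint h₃, card_union_of_disjoint h₁₂]

lemma noncrossing_glue (hlj : l < j) (hjr : j < r) (hT₁ : T₁ ⊆ allDiags l j)
    (hT₂ : T₂ ⊆ allDiags j r) (h₁ : Noncrossing T₁) (h₂ : Noncrossing T₂) :
    Noncrossing (glue l r j T₁ T₂) := by
  have key : ∀ p ∈ glue l r j T₁ T₂, (p ∈ T₁ ∧ IsDiag l j p.1 p.2) ∨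
      (p ∈ T₂ ∧ IsDiag j r p.1 p.2) ∨ p = (l, j) ∨ p = (j, r) := by
    intro p hp
    rcases (mem_glue hlj hjr).1 hp with hp | hp | ⟨hp, -⟩ | ⟨hp, -⟩
    exacts [Or.inl ⟨hp, isDiag_of_subset hT₁ hp⟩, Or.inr (Or.inl ⟨hp, isDiag_of_subset hT₂ hp⟩),
      Or.inr (Or.inr (Or.inl hp)), Or.inr (Or.inr (Or.inr hp))]
  intro p hp q hq
  rcases key p hp with ⟨hp, dp⟩ | ⟨hp, dp⟩ | rfl | rfl <;>
    rcases key q hq with ⟨hq, dq⟩ | ⟨hq, dq⟩ | rfl | rfl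
  all_goals first
    | exact h₁ p hp q hq
    | exact h₂ p hp q hq
    | (simp only [IsDiag, Crosses] at *; omega)

lemma glue_mem_triangulations (hlj : l < j) (hjr : j < r) (h₁ : T₁ ∈ triangulations l j)
    (h₂ : T₂ ∈ triangulations j r) : glue l r j T₁ T₂ ∈ triangulations l r := by
  obtain ⟨hT₁, hc₁, hn₁⟩ := mem_triangulations.1 h₁
  obtain ⟨hT₂, hc₂, hn₂⟩ := mem_triangulations.1 h₂
  refine mem_triangulations.2 ⟨glue_subset_allDiags hlj hjr hT₁ hT₂, ?_,
    noncrossing_glue hlj hjr hT₁ hT₂ hn₁ hn₂⟩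
  rw [card_glue hlj hjr hT₁ hT₂, card_apexDiags hlj hjr, hc₁, hc₂]
  split_ifs <;> omega

lemma IsSide.glue_left (hlj : l < j) (hjr : j < r) {x y : ℕ} (h : IsSide l j T₁ x y) :
    IsSide l r (glue l r j T₁ T₂) x y := by
  rcases h with (⟨h₁, h₂, h₃⟩ | ⟨rfl, rfl⟩) | h
  · exact Or.inl (Or.inl ⟨h₁, h₂, by omega⟩)
  · by_cases hx : x + 2 ≤ y
    · exact Or.inr ((mem_glue hlj hjr).2 (Or.inr (Or.inr (Or.inl ⟨rfl, hx⟩))))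
    · exact Or.inl (Or.inl ⟨le_rfl, by omega, by omega⟩)
  · exact Or.inr ((mem_glue hlj hjr).2 (Or.inl h))

lemma IsSide.glue_right (hlj : l < j) (hjr : j < r) {x y : ℕ} (h : IsSide j r T₂ x y) :
    IsSide l r (glue l r j T₁ T₂) x y := by
  rcases h with (⟨h₁, h₂, h₃⟩ | ⟨rfl, rfl⟩) | h
  · exact Or.inl (Or.inl ⟨by omega, h₂, h₃⟩)
  · by_cases hx : x + 2 ≤ y
    · exact Or.inr ((mem_glue hlj hjr).2 (Or.inr (Or.inr (Or.inr ⟨rfl, hx⟩))))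
    · exact Or.inl (Or.inl ⟨by omega, by omega, le_rfl⟩)
  · exact Or.inr ((mem_glue hlj hjr).2 (Or.inr (Or.inl h)))

lemma triangles_subset_glue_left (hlj : l < j) (hjr : j < r) :
    triangles l j T₁ ⊆ triangles l r (glue l r j T₁ T₂) := by
  simp only [triangles, subset_iff, mem_filter, mem_product, mem_range]
  rintro t ⟨⟨h₁, h₂, h₃⟩, h₄, h₅, s₁, s₂, s₃⟩
  exact ⟨⟨by omega, by omega, by omega⟩, h₄, h₅, s₁.glue_left hlj hjr, s₂.glue_left hlj hjr,
    s₃.glue_left hlj hjr⟩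

lemma triangles_subset_glue_right (hlj : l < j) (hjr : j < r) :
    triangles j r T₂ ⊆ triangles l r (glue l r j T₁ T₂) := by
  simp only [triangles, subset_iff, mem_filter, mem_product, mem_range]
  rintro t ⟨⟨h₁, h₂, h₃⟩, h₄, h₅, s₁, s₂, s₃⟩
  exact ⟨⟨h₁, h₂, h₃⟩, h₄, h₅, s₁.glue_right hlj hjr, s₂.glue_right hlj hjr,
    s₃.glue_right hlj hjr⟩

lemma apex_mem_triangles_glue (hlj : l < j) (hjr : j < r) :
    (l, j, r) ∈ triangles l r (glue l r j T₁ T₂) := by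
  simp only [triangles, mem_filter, mem_product, mem_range]
  exact ⟨⟨by omega, by omega, by omega⟩, hlj, hjr,
    IsSide.glue_left hlj hjr (Or.inl (Or.inr ⟨rfl, rfl⟩)),
    IsSide.glue_right hlj hjr (Or.inl (Or.inr ⟨rfl, rfl⟩)), Or.inl (Or.inr ⟨rfl, rfl⟩)⟩

lemma leftPart_glue (hlj : l < j) (hjr : j < r) (hT₁ : T₁ ⊆ allDiags l j)
    (hT₂ : T₂ ⊆ allDiags j r) : leftPart l j (glue l r j T₁ T₂) = T₁ := by
  ext p
  simp only [leftPart, mem_erase, mem_filter, mem_glue hlj hjr]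
  constructor
  · rintro ⟨hne, (h | h | ⟨rfl, -⟩ | ⟨rfl, -⟩), hle⟩
    · exact h
    · have := isDiag_of_subset hT₂ h
      simp only [IsDiag] at this
      omega
    · exact absurd rfl hne
    · simp only at hle
      omega
  · intro h
    refine ⟨?_, Or.inl h, (isDiag_of_subset hT₁ h).2.2.1⟩
    rintro rfl
    exact (isDiag_of_subset hT₁ h).2.2.2 ⟨rfl, rfl⟩

lemma rightPart_glue (hlj : l < j) (hjr : j < r) (hT₁ : T₁ ⊆ allDiags l j)
    (hT₂ : T₂ ⊆ allDiags j r) : rightPart j r (glue l r j T₁ T₂) = T₂ := by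
  ext p
  simp only [rightPart, mem_erase, mem_filter, mem_glue hlj hjr]
  constructor
  · rintro ⟨hne, (h | h | ⟨rfl, -⟩ | ⟨rfl, -⟩), hle⟩
    · have := isDiag_of_subset hT₁ h
      simp only [IsDiag] at this
      omega
    · exact h
    · simp only at hle
      omega
    · exact absurd rfl hne
  · intro h
    refine ⟨?_, Or.inr (Or.inl h), (isDiag_of_subset hT₂ h).1⟩
    rintro rfl
    exact (isDiag_of_subset hT₂ h).2.2.2 ⟨rfl, rfl⟩

end Glue

section Decomposition
variable {l r : ℕ} {T : Finset (ℕ × ℕ)}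

lemma mem_of_forall_not_crosses (hT : T ∈ triangulations l r) {p : ℕ × ℕ}
    (hp : IsDiag l r p.1 p.2)
    (hcross : ∀ q ∈ T, ¬ Crosses p.1 p.2 q.1 q.2 ∧ ¬ Crosses q.1 q.2 p.1 p.2) : p ∈ T := by
  obtain ⟨hsub, hcard, hNC⟩ := mem_triangulations.1 hT
  by_contra hpT
  have hNC' : Noncrossing (insert p T) := by
    intro q hq q' hq'
    rw [mem_insert] at hq hq'
    rcases hq with rfl | hq <;> rcases hq' with rfl | hq'
    · obtain ⟨-, h, -⟩ := hp
      simp only [Crosses]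
      omega
    exacts [(hcross q' hq').1, (hcross q hq).2, hNC q hq q' hq']
  have := card_le_of_noncrossing (insert_subset (mem_allDiags.2 hp) hsub) hNC'
  rw [card_insert_of_notMem hpT, hcard] at this
  omega

/-- The side `(l, r)` lies in a triangle `(l, j, r)`: take `j` maximal with `(l, j)` a side;
then no diagonal crosses `(j, r)`. -/
lemma exists_apex (hlr : l + 2 ≤ r) (hT : T ∈ triangulations l r) :
    ∃ j, l < j ∧ j < r ∧ IsSide l r T l j ∧ IsSide l r T j r := by
  obtain ⟨hsub, -, hNC⟩ := mem_triangulations.1 hT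
  have hne : ((Ioo l r).filter fun j => IsSide l r T l j).Nonempty :=
    ⟨l + 1, mem_filter.2 ⟨mem_Ioo.2 ⟨by omega, by omega⟩, Or.inl (Or.inl ⟨le_rfl, rfl, by omega⟩)⟩⟩
  obtain ⟨j, hj, hmax⟩ := exists_max_image _ id hne
  obtain ⟨⟨hlj, hjr⟩, hside⟩ := by simpa only [mem_filter, mem_Ioo] using hj
  refine ⟨j, hlj, hjr, hside, ?_⟩
  by_cases hr : r = j + 1
  · exact Or.inl (Or.inl ⟨by omega, hr, le_rfl⟩)
  refine Or.inr (mem_of_forall_not_crosses hT ⟨by omega, by omega, le_rfl, by omega⟩ ?_)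
  rintro ⟨a, b⟩ hp
  obtain ⟨hla, hab, hbr, -⟩ : IsDiag l r a b := isDiag_of_subset hsub hp
  have hfar : ¬ (a < j ∧ j < b ∧ b < r) := by
    rintro ⟨h₁, h₂, h₃⟩
    rcases hla.eq_or_lt with rfl | hla
    · have := hmax b (by simp only [mem_filter, mem_Ioo]; exact ⟨⟨by omega, h₃⟩, Or.inr hp⟩)
      simp only [id] at this
      omega
    · exact hside.not_crosses (by omega) hsub hNC (Or.inr hp) (Or.inl ⟨hla, h₁, h₂⟩)
  simp only [Crosses]
  omega

lemma leftPart_subset {j : ℕ} : leftPart l j T ⊆ T :=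
  (erase_subset _ _).trans (filter_subset _ _)

lemma rightPart_subset {j : ℕ} : rightPart j r T ⊆ T :=
  (erase_subset _ _).trans (filter_subset _ _)

lemma leftPart_subset_allDiags (hsub : T ⊆ allDiags l r) {j : ℕ} :
    leftPart l j T ⊆ allDiags l j := by
  intro p hp
  obtain ⟨hne, hp, hpj⟩ := by simpa only [leftPart, mem_erase, mem_filter] using hp
  obtain ⟨h₁, h₂, -, -⟩ := isDiag_of_subset hsub hp
  exact mem_allDiags.2 ⟨h₁, h₂, hpj, fun h => hne (Prod.ext h.1 h.2)⟩

lemma rightPart_subset_allDiags (hsub : T ⊆ allDiags l r) {j : ℕ} :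
    rightPart j r T ⊆ allDiags j r := by
  intro p hp
  obtain ⟨hne, hp, hjp⟩ := by simpa only [rightPart, mem_erase, mem_filter] using hp
  obtain ⟨-, h₂, h₃, -⟩ := isDiag_of_subset hsub hp
  exact mem_allDiags.2 ⟨hjp, h₂, h₃, fun h => hne (Prod.ext h.1 h.2)⟩

lemma eq_glue_leftPart_rightPart (hsub : T ⊆ allDiags l r) (hNC : Noncrossing T) {j : ℕ}
    (hlj : l < j) (hjr : j < r) (h₁ : IsSide l r T l j) (h₂ : IsSide l r T j r) :
    T = glue l r j (leftPart l j T) (rightPart j r T) := by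
  have hsplit : ∀ p ∈ T, p.2 ≤ j ∨ j ≤ p.1 := by
    intro p hp
    have := isDiag_of_subset hsub hp
    have := h₁.not_crosses (by omega) hsub hNC (Or.inr hp)
    have := h₂.not_crosses (by omega) hsub hNC (Or.inr hp)
    simp only [Crosses, IsDiag] at *
    omega
  ext p
  simp only [mem_glue hlj hjr, leftPart, rightPart, mem_erase, mem_filter]
  constructor
  · intro hp
    obtain ⟨-, h₂, -, -⟩ := isDiag_of_subset hsub hp
    by_cases hlj' : p = (l, j)
    · exact Or.inr (Or.inr (Or.inl ⟨hlj', by subst hlj'; omega⟩))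
    by_cases hjr' : p = (j, r)
    · exact Or.inr (Or.inr (Or.inr ⟨hjr', by subst hjr'; omega⟩))
    rcases hsplit p hp with h | h
    exacts [Or.inl ⟨hlj', hp, h⟩, Or.inr (Or.inl ⟨hjr', hp, h⟩)]
  · rintro (⟨-, hp, -⟩ | ⟨-, hp, -⟩ | ⟨rfl, h⟩ | ⟨rfl, h⟩)
    · exact hp
    · exact hp
    · exact h₁.resolve_left (by simp only [IsEdge]; omega)
    · exact h₂.resolve_left (by simp only [IsEdge]; omega)

/-- Both parts have the maximal number of diagonals, since their sizes add up to `r - l - 2`. -/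
lemma eq_glue_of_isSide (hT : T ∈ triangulations l r) {j : ℕ} (hlj : l < j) (hjr : j < r)
    (h₁ : IsSide l r T l j) (h₂ : IsSide l r T j r) :
    leftPart l j T ∈ triangulations l j ∧ rightPart j r T ∈ triangulations j r ∧
      T = glue l r j (leftPart l j T) (rightPart j r T) := by
  obtain ⟨hsub, hcard, hNC⟩ := mem_triangulations.1 hT
  have hglue := eq_glue_leftPart_rightPart hsub hNC hlj hjr h₁ h₂
  have hL : leftPart l j T ⊆ allDiags l j := leftPart_subset_allDiags hsub
  have hR : rightPart j r T ⊆ allDiags j r := rightPart_subset_allDiags hsub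
  have hnL : Noncrossing (leftPart l j T) := hNC.mono leftPart_subset
  have hnR : Noncrossing (rightPart j r T) := hNC.mono rightPart_subset
  have hcL := card_le_of_noncrossing hL hnL
  have hcR := card_le_of_noncrossing hR hnR
  have hc := congrArg card hglue
  rw [card_glue hlj hjr hL hR, card_apexDiags hlj hjr, hcard] at hc
  refine ⟨mem_triangulations.2 ⟨hL, ?_, hnL⟩, mem_triangulations.2 ⟨hR, ?_, hnR⟩, hglue⟩ <;>
    split_ifs at hc <;> omega

lemma exists_eq_glue (hlr : l + 2 ≤ r) (hT : T ∈ triangulations l r) :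
    ∃ j T₁ T₂, l < j ∧ j < r ∧ T₁ ∈ triangulations l j ∧ T₂ ∈ triangulations j r ∧
      T = glue l r j T₁ T₂ := by
  obtain ⟨j, hlj, hjr, h₁, h₂⟩ := exists_apex hlr hT
  obtain ⟨hL, hR, h⟩ := eq_glue_of_isSide hT hlj hjr h₁ h₂
  exact ⟨j, _, _, hlj, hjr, hL, hR, h⟩

end Decomposition

section Count
variable {l r : ℕ}

lemma sum_Ioo_catalan_mul_catalan (hlr : l + 2 ≤ r) :
    ∑ j ∈ Ioo l r, catalan (j - l - 1) * catalan (r - j - 1) = catalan (r - l - 1) := by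
  obtain ⟨m, rfl⟩ : ∃ m, r = l + m + 2 := ⟨r - l - 2, by omega⟩
  rw [show l + m + 2 - l - 1 = m + 1 by omega, catalan_succ']
  refine sum_nbij' (fun j => (j - l - 1, l + m + 2 - j - 1)) (fun ij => ij.1 + l + 1) ?_ ?_ ?_ ?_
    fun _ _ => rfl
  · intro j hj
    simp only [mem_Ioo, HasAntidiagonal.mem_antidiagonal] at hj ⊢
    omega
  · intro ij hij
    simp only [mem_Ioo, HasAntidiagonal.mem_antidiagonal] at hij ⊢
    omega
  · intro j hj
    simp only [mem_Ioo] at hj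
    omega
  · rintro ⟨i, k⟩ hij
    simp only [HasAntidiagonal.mem_antidiagonal] at hij
    simp only [Prod.mk.injEq]
    omega

lemma triangulations_succ : triangulations l (l + 1) = {∅} := by
  ext T
  simp only [mem_triangulations, mem_singleton]
  constructor
  · rintro ⟨hT, -, -⟩
    refine eq_empty_of_forall_notMem fun p hp => ?_
    obtain ⟨h, h', h'', -⟩ := isDiag_of_subset hT hp
    omega
  · rintro rfl
    simp [Noncrossing]

lemma triangulations_eq_biUnion (hlr : l + 2 ≤ r) :
    triangulations l r = (Ioo l r).biUnion fun j =>
      (triangulations l j ×ˢ triangulations j r).image fun P => glue l r j P.1 P.2 := by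
  ext T
  simp only [mem_biUnion, mem_image, mem_product, mem_Ioo, Prod.exists]
  constructor
  · intro hT
    obtain ⟨j, T₁, T₂, hlj, hjr, h₁, h₂, rfl⟩ := exists_eq_glue hlr hT
    exact ⟨j, ⟨hlj, hjr⟩, T₁, T₂, ⟨h₁, h₂⟩, rfl⟩
  · rintro ⟨j, ⟨hlj, hjr⟩, T₁, T₂, ⟨h₁, h₂⟩, rfl⟩
    exact glue_mem_triangulations hlj hjr h₁ h₂

/-- `j` is the third vertex of the only triangle on the side `(l, r)`. -/
lemma apex_eq_of_glue_eq {j j' : ℕ} {T₁ T₂ T₁' T₂' : Finset (ℕ × ℕ)} (hlj : l < j) (hjr : j < r)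
    (hlj' : l < j') (hjr' : j' < r) (h₁ : T₁ ∈ triangulations l j) (h₂ : T₂ ∈ triangulations j r)
    (h : glue l r j T₁ T₂ = glue l r j' T₁' T₂') : j = j' := by
  obtain ⟨hsub, -, hNC⟩ := mem_triangulations.1 (glue_mem_triangulations hlj hjr h₁ h₂)
  have ht' := apex_mem_triangles_glue (T₁ := T₁') (T₂ := T₂') hlj' hjr'
  rw [← h] at ht'
  have := eq_of_sideOf_of_isEdge (by omega) hsub hNC (e := (l, r)) (Or.inr ⟨rfl, rfl⟩)
    (apex_mem_triangles_glue hlj hjr) ht' (Or.inr (Or.inr rfl)) (Or.inr (Or.inr rfl))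
  simp only [Prod.mk.injEq] at this
  exact this.2.1

lemma card_image_glue {j : ℕ} (hlj : l < j) (hjr : j < r) :
    ((triangulations l j ×ˢ triangulations j r).image fun P => glue l r j P.1 P.2).card =
      (triangulations l j).card * (triangulations j r).card := by
  rw [card_image_of_injOn, card_product]
  rintro ⟨T₁, T₂⟩ h ⟨T₁', T₂'⟩ h' heq
  simp only [coe_product, Set.mem_prod, mem_coe, mem_triangulations] at h h' heq
  have e₁ := leftPart_glue hlj hjr h.1.1 h.2.1
  have e₂ := rightPart_glue hlj hjr h.1.1 h.2.1
  rw [heq, leftPart_glue hlj hjr h'.1.1 h'.2.1] at e₁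
  rw [heq, rightPart_glue hlj hjr h'.1.1 h'.2.1] at e₂
  rw [e₁, e₂]

lemma card_triangulations (hlr : l < r) : (triangulations l r).card = catalan (r - l - 1) := by
  induction hd : r - l using Nat.strong_induction_on generalizing l r with
  | _ d ih =>
  subst hd
  rcases (show r = l + 1 ∨ l + 2 ≤ r by omega) with rfl | hlr
  · simp [triangulations_succ]
  rw [triangulations_eq_biUnion hlr, card_biUnion, ← sum_Ioo_catalan_mul_catalan hlr]
  · refine sum_congr rfl fun j hj => ?_
    obtain ⟨hlj, hjr⟩ := mem_Ioo.1 hj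
    rw [card_image_glue hlj hjr, ih _ (by omega) hlj rfl, ih _ (by omega) hjr rfl]
  · intro j hj j' hj' hne
    simp only [coe_Ioo, Set.mem_Ioo] at hj hj'
    refine disjoint_left.2 fun T hT hT' => hne ?_
    obtain ⟨⟨T₁, T₂⟩, hP, rfl⟩ := mem_image.1 hT
    obtain ⟨⟨T₁', T₂'⟩, -, heq⟩ := mem_image.1 hT'
    rw [mem_product] at hP
    exact apex_eq_of_glue_eq hj.1 hj.2 hj'.1 hj'.2 hP.1 hP.2 heq.symm

end Count

section Edges
variable {l r : ℕ} {T : Finset (ℕ × ℕ)}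

lemma exists_mem_triangles_sideOf (hlr : l + 2 ≤ r) (hT : T ∈ triangulations l r)
    {e : ℕ × ℕ} (he : IsEdge l r e.1 e.2) : ∃ t ∈ triangles l r T, SideOf e t := by
  obtain ⟨i, k⟩ := e
  dsimp only at he
  induction hd : r - l using Nat.strong_induction_on generalizing l r T with
  | _ d ih =>
  subst hd
  obtain ⟨j, T₁, T₂, hlj, hjr, h₁, h₂, rfl⟩ := exists_eq_glue hlr hT
  have apex := apex_mem_triangles_glue (T₁ := T₁) (T₂ := T₂) hlj hjr
  rcases he with ⟨hli, rfl, hir⟩ | ⟨rfl, rfl⟩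
  · by_cases hij : i + 1 ≤ j
    · by_cases hj : l + 2 ≤ j
      · obtain ⟨t, ht, hs⟩ := ih _ (by omega) hj h₁ (Or.inl ⟨hli, rfl, hij⟩) rfl
        exact ⟨t, triangles_subset_glue_left hlj hjr ht, hs⟩
      · exact ⟨_, apex, Or.inl (by simp only [Prod.mk.injEq]; omega)⟩
    · by_cases hj : j + 2 ≤ r
      · obtain ⟨t, ht, hs⟩ := ih _ (by omega) hj h₂ (Or.inl ⟨by omega, rfl, hir⟩) rfl
        exact ⟨t, triangles_subset_glue_right hlj hjr ht, hs⟩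
      · exact ⟨_, apex, Or.inr (Or.inl (by simp only [Prod.mk.injEq]; omega))⟩
  · exact ⟨_, apex, Or.inr (Or.inr rfl)⟩

noncomputable def polygonEdges (l r : ℕ) : Finset (ℕ × ℕ) :=
  insert (l, r) ((Ico l r).image fun i => (i, i + 1))

lemma mem_polygonEdges (hlr : l + 2 ≤ r) {e : ℕ × ℕ} :
    e ∈ polygonEdges l r ↔ IsEdge l r e.1 e.2 := by
  obtain ⟨i, k⟩ := e
  simp only [polygonEdges, mem_insert, mem_image, mem_Ico, Prod.mk.injEq, IsEdge]
  constructor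
  · rintro (⟨rfl, rfl⟩ | ⟨i, ⟨h₁, h₂⟩, rfl, rfl⟩)
    exacts [Or.inr ⟨rfl, rfl⟩, Or.inl ⟨h₁, rfl, h₂⟩]
  · rintro (⟨h₁, rfl, h₂⟩ | h)
    exacts [Or.inr ⟨i, ⟨h₁, h₂⟩, rfl, rfl⟩, Or.inl h]

lemma card_polygonEdges (hlr : l + 2 ≤ r) : (polygonEdges l r).card = r - l + 1 := by
  rw [polygonEdges, card_insert_of_notMem, card_image_of_injective, Nat.card_Ico]
  · intro i i' h
    simpa using h
  · simp only [mem_image, mem_Ico, Prod.mk.injEq, not_exists, not_and]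
    omega

lemma edgeCount_eq_sum_sideOf (hlr : l + 2 ≤ r) {a b c : ℕ} (hab : a < b) (hbc : b < c) :
    edgeCount l r a b c = ∑ e ∈ polygonEdges l r, if SideOf e (a, b, c) then 1 else 0 := by
  have h : ∀ e : ℕ × ℕ, (if SideOf e (a, b, c) then 1 else 0) =
      (if e = (a, b) then 1 else 0) + (if e = (b, c) then 1 else 0) +
        (if e = (a, c) then 1 else 0) := by
    rintro ⟨x, y⟩
    simp only [SideOf, Prod.mk.injEq]
    split_ifs <;> omega
  simp only [h, sum_add_distrib, sum_ite_eq', mem_polygonEdges hlr, edgeCount]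

/-- Every boundary edge lies in exactly one triangle, so the numbers of boundary sides of the
triangles add up to the number of edges. -/
lemma sum_edgeCount (hlr : l + 2 ≤ r) (hT : T ∈ triangulations l r) :
    ∑ t ∈ triangles l r T, edgeCount l r t.1 t.2.1 t.2.2 = r - l + 1 := by
  obtain ⟨hsub, -, hNC⟩ := mem_triangulations.1 hT
  have hone : ∀ e ∈ polygonEdges l r,
      ∑ t ∈ triangles l r T, (if SideOf e t then 1 else 0) = 1 := by
    intro e he
    rw [mem_polygonEdges hlr] at he
    obtain ⟨t, ht, hs⟩ := exists_mem_triangles_sideOf hlr hT he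
    rw [sum_boole, Nat.cast_id, card_eq_one_iff_existsUnique]
    refine ⟨t, mem_filter.2 ⟨ht, hs⟩, fun t' ht' => ?_⟩
    obtain ⟨ht', hs'⟩ := mem_filter.1 ht'
    exact eq_of_sideOf_of_isEdge (by omega) hsub hNC he ht' ht hs' hs
  calc ∑ t ∈ triangles l r T, edgeCount l r t.1 t.2.1 t.2.2
      = ∑ t ∈ triangles l r T, ∑ e ∈ polygonEdges l r, if SideOf e t then 1 else 0 := by
        refine sum_congr rfl fun t ht => ?_
        obtain ⟨-, hab, hbc, -⟩ := bounds_of_mem_triangles (by omega) hsub ht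
        exact edgeCount_eq_sum_sideOf hlr hab hbc
    _ = ∑ e ∈ polygonEdges l r, 1 := by rw [sum_comm]; exact sum_congr rfl hone
    _ = r - l + 1 := by rw [sum_const, smul_eq_mul, mul_one, card_polygonEdges hlr]

end Edges

/-- The diagonal of `P_n` cutting off the vertex `w` (with `0 ≡ n`, `n + 1 ≡ 1`). -/
def earDiag (n w : ℕ) : ℕ × ℕ :=
  if w = 1 then (2, n) else if w = n then (1, n - 1) else (w - 1, w + 1)

def deleteVertex (w : ℕ) : ℕ × ℕ → ℕ × ℕ := Prod.map (squeeze (w - 1) 1) (squeeze (w - 1) 1)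

def insertVertex (w : ℕ) : ℕ × ℕ → ℕ × ℕ := Prod.map (stretch (w - 1) 1) (stretch (w - 1) 1)

section EarDiag
variable {n w : ℕ}

lemma isDiag_earDiag (hn : 4 ≤ n) (hw₁ : 1 ≤ w) (hwn : w ≤ n) :
    IsDiag 1 n (earDiag n w).1 (earDiag n w).2 := by
  unfold earDiag IsDiag
  split_ifs <;> omega

lemma not_crosses_earDiag_iff (hn : 4 ≤ n) (hw₁ : 1 ≤ w) {p : ℕ × ℕ}
    (hp : IsDiag 1 n p.1 p.2) (hne : p ≠ earDiag n w) :
    (¬ Crosses p.1 p.2 (earDiag n w).1 (earDiag n w).2 ∧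
      ¬ Crosses (earDiag n w).1 (earDiag n w).2 p.1 p.2) ↔ p.1 ≠ w ∧ p.2 ≠ w := by
  obtain ⟨a, b⟩ := p
  unfold earDiag at *
  split_ifs at * <;> simp only [IsDiag, Crosses, ne_eq, Prod.mk.injEq] at * <;> omega

lemma isDiag_deleteVertex (hn : 4 ≤ n) (hw₁ : 1 ≤ w) (hwn : w ≤ n) {p : ℕ × ℕ}
    (hp : IsDiag 1 n p.1 p.2) (hne : p ≠ earDiag n w) (h₁ : p.1 ≠ w) (h₂ : p.2 ≠ w) :
    IsDiag 1 (n - 1) (deleteVertex w p).1 (deleteVertex w p).2 := by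
  obtain ⟨a, b⟩ := p
  simp only [deleteVertex, Prod.map, squeeze, IsDiag] at *
  unfold earDiag at hne
  split_ifs at hne ⊢ <;> simp only [ne_eq, Prod.mk.injEq] at hne <;> omega

lemma isDiag_insertVertex (hn : 4 ≤ n) (hw₁ : 1 ≤ w) (hwn : w ≤ n) {q : ℕ × ℕ}
    (hq : IsDiag 1 (n - 1) q.1 q.2) :
    IsDiag 1 n (insertVertex w q).1 (insertVertex w q).2 ∧ (insertVertex w q).1 ≠ w ∧
      (insertVertex w q).2 ≠ w ∧ insertVertex w q ≠ earDiag n w := by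
  obtain ⟨a, b⟩ := q
  simp only [insertVertex, Prod.map, stretch, IsDiag] at *
  unfold earDiag
  split_ifs <;> simp only [ne_eq, Prod.mk.injEq] <;> omega

lemma deleteVertex_insertVertex (q : ℕ × ℕ) : deleteVertex w (insertVertex w q) = q := by
  simp only [deleteVertex, insertVertex, Prod.map, squeeze_stretch]

lemma insertVertex_deleteVertex (hw₁ : 1 ≤ w) {p : ℕ × ℕ} (h₁ : p.1 ≠ w) (h₂ : p.2 ≠ w) :
    insertVertex w (deleteVertex w p) = p := by
  simp only [deleteVertex, insertVertex, Prod.map]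
  rw [stretch_squeeze (by omega), stretch_squeeze (by omega)]

lemma crosses_deleteVertex_iff (hw₁ : 1 ≤ w) {p q : ℕ × ℕ} (hp₁ : p.1 ≠ w) (hp₂ : p.2 ≠ w)
    (hq₁ : q.1 ≠ w) (hq₂ : q.2 ≠ w) :
    Crosses (deleteVertex w p).1 (deleteVertex w p).2 (deleteVertex w q).1
      (deleteVertex w q).2 ↔ Crosses p.1 p.2 q.1 q.2 := by
  have hs : ∀ v, v ≠ w → v ∈ {v | v ≤ w - 1 ∨ w - 1 + 1 < v} := fun v hv => by
    simp only [Set.mem_ofPred_eq]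
    omega
  exact strictMonoOn_squeeze.crosses_iff (hs _ hp₁) (hs _ hp₂) (hs _ hq₁) (hs _ hq₂)

lemma crosses_insertVertex_iff {p q : ℕ × ℕ} :
    Crosses (insertVertex w p).1 (insertVertex w p).2 (insertVertex w q).1
      (insertVertex w q).2 ↔ Crosses p.1 p.2 q.1 q.2 :=
  (strictMono_stretch.strictMonoOn Set.univ).crosses_iff trivial trivial trivial trivial

end EarDiag

section EarCount
variable {n w : ℕ} {T S : Finset (ℕ × ℕ)}

lemma avoids_of_mem_erase_earDiag (hn : 4 ≤ n) (hw₁ : 1 ≤ w) (hT : T ∈ triangulations 1 n)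
    (hd : earDiag n w ∈ T) {p : ℕ × ℕ} (hp : p ∈ T.erase (earDiag n w)) : p.1 ≠ w ∧ p.2 ≠ w := by
  obtain ⟨hsub, -, hNC⟩ := mem_triangulations.1 hT
  obtain ⟨hne, hpT⟩ := mem_erase.1 hp
  exact (not_crosses_earDiag_iff hn hw₁ (isDiag_of_subset hsub hpT) hne).1
    ⟨hNC _ hpT _ hd, hNC _ hd _ hpT⟩

lemma image_deleteVertex_mem_triangulations (hn : 4 ≤ n) (hw₁ : 1 ≤ w) (hwn : w ≤ n)
    (hT : T ∈ triangulations 1 n) (hd : earDiag n w ∈ T) :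
    (T.erase (earDiag n w)).image (deleteVertex w) ∈ triangulations 1 (n - 1) := by
  obtain ⟨hsub, hcard, hNC⟩ := mem_triangulations.1 hT
  have avoid := fun {p} => avoids_of_mem_erase_earDiag (p := p) hn hw₁ hT hd
  refine mem_triangulations.2 ⟨?_, ?_, ?_⟩
  · simp only [subset_iff, mem_image, mem_allDiags]
    rintro _ ⟨p, hp, rfl⟩
    exact isDiag_deleteVertex hn hw₁ hwn (isDiag_of_subset hsub (mem_of_mem_erase hp))
      (ne_of_mem_erase hp) (avoid hp).1 (avoid hp).2
  · have inj : Set.InjOn (deleteVertex w) (T.erase (earDiag n w)) := fun p hp q hq h => by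
      rw [← insertVertex_deleteVertex hw₁ (avoid hp).1 (avoid hp).2, h,
        insertVertex_deleteVertex hw₁ (avoid hq).1 (avoid hq).2]
    rw [card_image_of_injOn inj, card_erase_of_mem hd, hcard]
    omega
  · simp only [Noncrossing, mem_image]
    rintro _ ⟨p, hp, rfl⟩ _ ⟨q, hq, rfl⟩
    rw [crosses_deleteVertex_iff hw₁ (avoid hp).1 (avoid hp).2 (avoid hq).1 (avoid hq).2]
    exact hNC _ (mem_of_mem_erase hp) _ (mem_of_mem_erase hq)

lemma earDiag_notMem_image_insertVertex (hn : 4 ≤ n) (hw₁ : 1 ≤ w) (hwn : w ≤ n)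
    (hS : S ∈ triangulations 1 (n - 1)) : earDiag n w ∉ S.image (insertVertex w) := by
  simp only [mem_image, not_exists, not_and]
  exact fun q hq =>
    (isDiag_insertVertex hn hw₁ hwn (isDiag_of_subset (mem_triangulations.1 hS).1 hq)).2.2.2

lemma insert_image_insertVertex_mem_triangulations (hn : 4 ≤ n) (hw₁ : 1 ≤ w) (hwn : w ≤ n)
    (hS : S ∈ triangulations 1 (n - 1)) :
    insert (earDiag n w) (S.image (insertVertex w)) ∈ triangulations 1 n := by
  obtain ⟨hsub, hcard, hNC⟩ := mem_triangulations.1 hS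
  have hq := fun {q} (hq : q ∈ S) => isDiag_insertVertex hn hw₁ hwn (isDiag_of_subset hsub hq)
  refine mem_triangulations.2 ⟨?_, ?_, ?_⟩
  · refine insert_subset (mem_allDiags.2 (isDiag_earDiag hn hw₁ hwn)) ?_
    simp only [subset_iff, mem_image, mem_allDiags]
    rintro _ ⟨q, hqS, rfl⟩
    exact (hq hqS).1
  · rw [card_insert_of_notMem (earDiag_notMem_image_insertVertex hn hw₁ hwn hS),
      card_image_of_injective _ (Function.LeftInverse.injective deleteVertex_insertVertex), hcard]
    omega
  · intro p hp p' hp'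
    simp only [mem_insert, mem_image] at hp hp'
    rcases hp with rfl | ⟨q, hqS, rfl⟩ <;> rcases hp' with rfl | ⟨q', hqS', rfl⟩
    · simp only [Crosses]
      omega
    · exact ((not_crosses_earDiag_iff hn hw₁ (hq hqS').1 (hq hqS').2.2.2).2
        ⟨(hq hqS').2.1, (hq hqS').2.2.1⟩).2
    · exact ((not_crosses_earDiag_iff hn hw₁ (hq hqS).1 (hq hqS).2.2.2).2
        ⟨(hq hqS).2.1, (hq hqS).2.2.1⟩).1
    · rw [crosses_insertVertex_iff]
      exact hNC _ hqS _ hqS'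

/-- Deleting the vertex `w` is a bijection from the triangulations containing `earDiag n w`
onto the triangulations of `P_{n-1}`. -/
lemma card_filter_earDiag_mem (hn : 4 ≤ n) (hw₁ : 1 ≤ w) (hwn : w ≤ n) :
    ((triangulations 1 n).filter fun T => earDiag n w ∈ T).card = catalan (n - 3) := by
  rw [show n - 3 = n - 1 - 1 - 1 by omega, ← card_triangulations (by omega)]
  refine card_nbij' (fun T => (T.erase (earDiag n w)).image (deleteVertex w))
    (fun S => insert (earDiag n w) (S.image (insertVertex w))) ?_ ?_ ?_ ?_
  · intro T hT
    obtain ⟨hT, hd⟩ := mem_filter.1 hT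
    exact image_deleteVertex_mem_triangulations hn hw₁ hwn hT hd
  · intro S hS
    exact mem_filter.2 ⟨insert_image_insertVertex_mem_triangulations hn hw₁ hwn hS,
      mem_insert_self _ _⟩
  · intro T hT
    obtain ⟨hT, hd⟩ := mem_filter.1 hT
    dsimp only
    rw [image_image, image_congr (g := id), image_id, insert_erase hd]
    intro p hp
    exact insertVertex_deleteVertex hw₁ (avoids_of_mem_erase_earDiag hn hw₁ hT hd hp).1
      (avoids_of_mem_erase_earDiag hn hw₁ hT hd hp).2
  · intro S hS
    dsimp only
    rw [erase_insert (earDiag_notMem_image_insertVertex hn hw₁ hwn hS), image_image,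
      Function.LeftInverse.comp_eq_id deleteVertex_insertVertex, image_id]

end EarCount

def earTriangle (n w : ℕ) : ℕ × ℕ × ℕ :=
  if w = 1 then (1, 2, n) else if w = n then (1, n - 1, n) else (w - 1, w, w + 1)

section Ears
variable {n w : ℕ} {T : Finset (ℕ × ℕ)}

lemma two_le_edgeCount_iff (hn : 4 ≤ n) {a b c : ℕ} (ha : 1 ≤ a) (hab : a < b) (hbc : b < c)
    (hcn : c ≤ n) : 2 ≤ edgeCount 1 n a b c ↔ ∃ w ∈ Icc 1 n, earTriangle n w = (a, b, c) := by
  constructor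
  · intro h
    have : (b = a + 1 ∧ c = a + 2) ∨ (a = 1 ∧ b = 2 ∧ c = n) ∨ (a = 1 ∧ b = n - 1 ∧ c = n) := by
      unfold edgeCount IsEdge at h
      split_ifs at h <;> omega
    rcases this with ⟨rfl, rfl⟩ | ⟨rfl, rfl, hc⟩ | ⟨rfl, rfl, hc⟩ <;> try subst c
    · refine ⟨a + 1, mem_Icc.2 ⟨by omega, by omega⟩, ?_⟩
      rw [earTriangle, if_neg (by omega), if_neg (by omega), Nat.add_sub_cancel]
    · exact ⟨1, mem_Icc.2 ⟨le_rfl, by omega⟩, by simp [earTriangle]⟩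
    · exact ⟨n, mem_Icc.2 ⟨by omega, le_rfl⟩, by rw [earTriangle, if_neg (by omega), if_pos rfl]⟩
  · rintro ⟨w, hw, h⟩
    rw [mem_Icc] at hw
    unfold earTriangle at h
    unfold edgeCount IsEdge
    split_ifs at h <;> simp only [Prod.mk.injEq] at h <;> split_ifs <;> omega

lemma injOn_earTriangle (hn : 4 ≤ n) : Set.InjOn (earTriangle n) (Icc 1 n) := by
  intro w hw w' hw' h
  simp only [coe_Icc, Set.mem_Icc] at hw hw'
  unfold earTriangle at h
  split_ifs at h <;> simp only [Prod.mk.injEq] at h <;> omega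

lemma earTriangle_mem_triangles_iff (hn : 4 ≤ n) (hw₁ : 1 ≤ w) (hwn : w ≤ n)
    (hT : T ⊆ allDiags 1 n) : earTriangle n w ∈ triangles 1 n T ↔ earDiag n w ∈ T := by
  rw [mem_triangles (by omega) hT]
  unfold earTriangle earDiag
  split_ifs <;> dsimp only <;> constructor
  all_goals first
    | rintro ⟨-, -, h₁, h₂, h₃⟩
      first
        | exact h₁.resolve_left (by unfold IsEdge; omega)
        | exact h₂.resolve_left (by unfold IsEdge; omega)
        | exact h₃.resolve_left (by unfold IsEdge; omega)
    | intro h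
      refine ⟨by omega, by omega, ?_, ?_, ?_⟩ <;>
        first | exact Or.inr h | exact Or.inl (by unfold IsEdge; omega)

lemma earCount_eq_card (hn : 4 ≤ n) (hT : T ∈ triangulations 1 n) :
    earCount n T = ((Icc 1 n).filter fun w => earDiag n w ∈ T).card := by
  obtain ⟨hsub, -, -⟩ := mem_triangulations.1 hT
  have hears : (triangles 1 n T).filter (fun t => 2 ≤ edgeCount 1 n t.1 t.2.1 t.2.2) =
      ((Icc 1 n).filter fun w => earDiag n w ∈ T).image (earTriangle n) := by
    ext ⟨a, b, c⟩
    simp only [mem_filter, mem_image]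
    constructor
    · rintro ⟨ht, h⟩
      obtain ⟨ha, hab, hbc, hcn⟩ := bounds_of_mem_triangles (by omega) hsub ht
      obtain ⟨w, hw, hwt⟩ := (two_le_edgeCount_iff hn ha hab hbc hcn).1 h
      obtain ⟨hw₁, hwn⟩ := mem_Icc.1 hw
      rw [← hwt] at ht
      exact ⟨w, ⟨hw, (earTriangle_mem_triangles_iff hn hw₁ hwn hsub).1 ht⟩, hwt⟩
    · rintro ⟨w, ⟨hw, hd⟩, hwt⟩
      obtain ⟨hw₁, hwn⟩ := mem_Icc.1 hw
      have ht := (earTriangle_mem_triangles_iff hn hw₁ hwn hsub).2 hd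
      rw [hwt] at ht
      obtain ⟨ha, hab, hbc, hcn⟩ := bounds_of_mem_triangles (by omega) hsub ht
      exact ⟨ht, (two_le_edgeCount_iff hn ha hab hbc hcn).2 ⟨w, hw, hwt⟩⟩
  rw [earCount, hears,
    card_image_of_injOn ((injOn_earTriangle hn).mono (coe_subset.2 (filter_subset _ _)))]

lemma sum_earCount (hn : 4 ≤ n) :
    ∑ T ∈ triangulations 1 n, earCount n T = n * catalan (n - 3) := by
  calc ∑ T ∈ triangulations 1 n, earCount n T
      = ∑ T ∈ triangulations 1 n, ∑ w ∈ Icc 1 n, if earDiag n w ∈ T then 1 else 0 := by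
        refine sum_congr rfl fun T hT => ?_
        rw [earCount_eq_card hn hT, sum_boole, Nat.cast_id]
    _ = ∑ w ∈ Icc 1 n, catalan (n - 3) := by
        rw [sum_comm]
        refine sum_congr rfl fun w hw => ?_
        rw [sum_boole, Nat.cast_id, card_filter_earDiag_mem hn (mem_Icc.1 hw).1 (mem_Icc.1 hw).2]
    _ = n * catalan (n - 3) := by simp

end Ears

lemma edgeCount_le_two {l r a b c : ℕ} (hlr : l + 3 ≤ r) (hab : a < b) (hbc : b < c) :
    edgeCount l r a b c ≤ 2 := by
  unfold edgeCount IsEdge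
  split_ifs <;> omega

/-- For `n ≥ 4` no triangle has three boundary sides, and the `n` boundary edges are shared out
among the triangles. -/
lemma oneSideCount_add_two_mul_earCount {n : ℕ} (hn : 4 ≤ n) {T : Finset (ℕ × ℕ)}
    (hT : T ∈ triangulations 1 n) : oneSideCount n T + 2 * earCount n T = n := by
  obtain ⟨hsub, -, -⟩ := mem_triangulations.1 hT
  calc oneSideCount n T + 2 * earCount n T
      = ∑ t ∈ triangles 1 n T, ((if edgeCount 1 n t.1 t.2.1 t.2.2 = 1 then 1 else 0) +
          2 * if 2 ≤ edgeCount 1 n t.1 t.2.1 t.2.2 then 1 else 0) := by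
        rw [sum_add_distrib, ← mul_sum, sum_boole, sum_boole, Nat.cast_id, Nat.cast_id]
        rfl
    _ = ∑ t ∈ triangles 1 n T, edgeCount 1 n t.1 t.2.1 t.2.2 := by
        refine sum_congr rfl fun t ht => ?_
        obtain ⟨-, hab, hbc, -⟩ := bounds_of_mem_triangles (by omega) hsub ht
        have := edgeCount_le_two (by omega : 1 + 3 ≤ n) hab hbc
        split_ifs <;> omega
    _ = n := by rw [sum_edgeCount (by omega) hT]; omega

lemma succ_succ_mul_catalan_succ (m : ℕ) :
    (m + 2) * catalan (m + 1) = 2 * (2 * m + 1) * catalan m := by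
  refine Nat.eq_of_mul_eq_mul_left m.succ_pos ?_
  calc (m + 1) * ((m + 2) * catalan (m + 1)) = (m + 1) * (m + 1).centralBinom := by
        rw [← succ_mul_catalan_eq_centralBinom]
    _ = 2 * (2 * m + 1) * m.centralBinom := Nat.succ_mul_centralBinom_succ m
    _ = (m + 1) * (2 * (2 * m + 1) * catalan m) := by
        rw [← succ_mul_catalan_eq_centralBinom]
        ring

/-- the expected number of triangles with exactly one side on `P_n`
is `n(n-4)/(2n-5)` (Lemma 2(II)). -/
theorem oneSide_expectation (n : ℕ) (hn : 4 ≤ n) :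
    (2 * n - 5) * ∑ T ∈ triangulations 1 n, oneSideCount n T =
      n * (n - 4) * catalan (n - 2) := by
  have hsum : ∑ T ∈ triangulations 1 n, oneSideCount n T + 2 * (n * catalan (n - 3)) =
      n * catalan (n - 2) := by
    rw [← sum_earCount hn, mul_sum, ← sum_add_distrib,
      sum_congr rfl fun T hT => oneSideCount_add_two_mul_earCount hn hT, sum_const,
      card_triangulations (by omega), smul_eq_mul, mul_comm, show n - 1 - 1 = n - 2 by omega]
  obtain ⟨m, rfl⟩ : ∃ m, n = m + 4 := ⟨n - 4, by omega⟩
  have hcat := succ_succ_mul_catalan_succ (m + 1)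
  simp only [show m + 4 - 2 = m + 1 + 1 by omega, show m + 4 - 3 = m + 1 by omega,
    show 2 * (m + 4) - 5 = 2 * (m + 1) + 1 by omega, show m + 4 - 4 = m by omega] at hsum ⊢
  nlinarith
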